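/- arXiv:2510.14246 — 4 statements merged into one kernel-verified Lean document; each statement's English description precedes it below -/
import Mathlib

section
/- Let S be a measurable space, μ⁰ a probability measure on S, ρ ∈ (0,1], and V : S → [0,H] a bounded measurable function with inf_{s} V(s) = 0. Then the infimum of E_{s∼μ}[V(s)] over all probability measures μ with total variation distance D_TV(μ‖μ⁰) ≤ ρ equals max_{α∈[0,H]} ( E_{s∼μ⁰}[min(V(s),α)] − ρα ). -/
open MeasureTheory

namespace TVAux

variable {S : Type*} [MeasurableSpace S]

lemma restrict_le_restrict_of_forall {μ ν : Measure S} {E : Set S} (hE : MeasurableSet E)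
    (h : ∀ t, MeasurableSet t → t ⊆ E → ν t ≤ μ t) : ν.restrict E ≤ μ.restrict E := by
  rw [Measure.le_iff]
  intro t ht
  rw [Measure.restrict_apply ht, Measure.restrict_apply ht]
  exact h _ (ht.inter hE) Set.inter_subset_right

lemma sub_inter_eq {μ ν : Measure S} [IsFiniteMeasure ν] {E A : Set S}
    (hE : MeasurableSet E) (hA : MeasurableSet A)
    (h1 : ∀ t, MeasurableSet t → t ⊆ E → ν t ≤ μ t) :
    (μ - ν) (A ∩ E) = μ (A ∩ E) - ν (A ∩ E) := by
  calc (μ - ν) (A ∩ E) = (μ - ν).restrict E A := (Measure.restrict_apply hA).symm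
    _ = (μ.restrict E - ν.restrict E) A := by
        rw [Measure.restrict_sub_eq_restrict_sub_restrict hE]
    _ = μ.restrict E A - ν.restrict E A :=
        Measure.sub_apply hA (restrict_le_restrict_of_forall hE h1)
    _ = μ (A ∩ E) - ν (A ∩ E) := by rw [Measure.restrict_apply hA, Measure.restrict_apply hA]

lemma sub_univ_of_hahn {μ ν : Measure S} [IsFiniteMeasure ν] {E : Set S}
    (hE : MeasurableSet E) (h1 : ∀ t, MeasurableSet t → t ⊆ E → ν t ≤ μ t)
    (h2 : ∀ t, MeasurableSet t → t ⊆ Eᶜ → μ t ≤ ν t) :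
    (μ - ν) Set.univ = μ E - ν E := by
  have hzero : (μ - ν) Eᶜ = 0 :=
    Measure.sub_apply_eq_zero_of_restrict_le_restrict
      (restrict_le_restrict_of_forall hE.compl h2) hE.compl
  have hEeq : (μ - ν) E = μ E - ν E := by
    have := sub_inter_eq (μ := μ) (ν := ν) hE MeasurableSet.univ h1
    simpa using this
  rw [← measure_add_measure_compl (μ := μ - ν) hE, hEeq, hzero, add_zero]

lemma le_sub_add (μ ν : Measure S) [IsFiniteMeasure μ] [IsFiniteMeasure ν] :
    μ ≤ (μ - ν) + ν := by
  obtain ⟨E, hE, h1, h2⟩ := hahn_decomposition (μ := μ) (ν := ν)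
  rw [Measure.le_iff]
  intro A hA
  have hAE : μ A = μ (A ∩ E) + μ (A ∩ Eᶜ) := by
    rw [← Set.diff_eq, measure_inter_add_diff A hE]
  have hAEν : ν (A ∩ E) + ν (A ∩ Eᶜ) = ν A := by
    rw [← Set.diff_eq, measure_inter_add_diff A hE]
  have hkey := sub_inter_eq (μ := μ) (ν := ν) hE hA h1
  calc μ A = μ (A ∩ E) + μ (A ∩ Eᶜ) := hAE
    _ ≤ (μ (A ∩ E) - ν (A ∩ E) + ν (A ∩ E)) + ν (A ∩ Eᶜ) :=
        add_le_add le_tsub_add (h2 _ (hA.inter hE.compl) Set.inter_subset_right)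
    _ = (μ - ν) (A ∩ E) + (ν (A ∩ E) + ν (A ∩ Eᶜ)) := by rw [hkey]; ring
    _ ≤ (μ - ν) A + ν A := by
        rw [hAEν]
        exact add_le_add (measure_mono Set.inter_subset_left) le_rfl
    _ = ((μ - ν) + ν) A := rfl

lemma sub_univ_symm {μ ν : Measure S} [IsFiniteMeasure μ] [IsFiniteMeasure ν]
    (h : μ Set.univ = ν Set.univ) : (μ - ν) Set.univ = (ν - μ) Set.univ := by
  obtain ⟨E, hE, h1, h2⟩ := hahn_decomposition (μ := μ) (ν := ν)
  have e1 : (μ - ν) Set.univ = μ E - ν E := sub_univ_of_hahn hE h1 h2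
  have e2 : (ν - μ) Set.univ = ν Eᶜ - μ Eᶜ := by
    refine sub_univ_of_hahn hE.compl h2 ?_
    intro t ht hts
    exact h1 t ht (by rwa [compl_compl] at hts)
  have hba : ν E ≤ μ E := h1 E hE subset_rfl
  have hdc : μ Eᶜ ≤ ν Eᶜ := h2 Eᶜ hE.compl subset_rfl
  have hsum : μ E + μ Eᶜ = ν E + ν Eᶜ := by
    rw [measure_add_measure_compl hE, measure_add_measure_compl hE, h]
  rw [e1, e2]
  have hfin : ν E + μ Eᶜ ≠ ⊤ :=
    ENNReal.add_ne_top.2 ⟨measure_ne_top _ _, measure_ne_top _ _⟩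
  apply (ENNReal.add_left_inj hfin).1
  rw [← add_assoc, tsub_add_cancel_of_le hba, add_comm (ν E) (μ Eᶜ), ← add_assoc,
    tsub_add_cancel_of_le hdc, hsum, add_comm]

end TVAux

/-- Total variation distance `D_TV(μ‖ν) = (1/2)∫|μ − ν|`, expressed for finite
measures via the Jordan-type decomposition `|μ − ν| = (μ − ν) + (ν − μ)`
(with `−` the truncated subtraction of measures). -/
noncomputable def tvDist {S : Type*} [MeasurableSpace S] (μ ν : Measure S) : ℝ :=
  (1 / 2) * (((μ - ν) Set.univ) + ((ν - μ) Set.univ)).toReal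

/-- Dual formulation of the TV-constrained robust expectation under the
fail-state assumption (`inf V = 0`): the infimum of `E_{s∼μ}[V]` over probability
measures `μ` with `D_TV(μ‖μ⁰) ≤ ρ` equals
`max_{α ∈ [0,H]} ( E_{s∼μ⁰}[min(V,α)] − ρα )`. -/
theorem tv_robust_expectation_dual {S : Type*} [MeasurableSpace S] [Nonempty S]
    (μ0 : Measure S) [IsProbabilityMeasure μ0] (ρ H : ℝ)
    (hρ : ρ ∈ Set.Ioc (0 : ℝ) 1)
    (V : S → ℝ) (hV : Measurable V) (hV0 : ∀ s, 0 ≤ V s) (hVH : ∀ s, V s ≤ H)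
    (hmin : (⨅ s, V s) = 0) :
    sInf {x : ℝ | ∃ μ : Measure S, IsProbabilityMeasure μ ∧ tvDist μ μ0 ≤ ρ ∧
        x = ∫ s, V s ∂μ}
      = ⨆ α : Set.Icc (0 : ℝ) H, (∫ s, min (V s) α.1 ∂μ0 - ρ * α.1) := by
  obtain ⟨hρ0, hρ1⟩ := hρ
  have hH0 : 0 ≤ H := le_trans (hV0 (Classical.arbitrary S)) (hVH _)
  haveI : Nonempty (Set.Icc (0:ℝ) H) := ⟨⟨0, Set.left_mem_Icc.mpr hH0⟩⟩
  -- integrability facts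
  have hVint : ∀ (μ : Measure S), IsFiniteMeasure μ → Integrable V μ := by
    intro μ hμ
    exact (integrable_const H).mono' hV.aestronglyMeasurable
      (Filter.Eventually.of_forall fun s => by
        rw [Real.norm_of_nonneg (hV0 s)]; exact hVH s)
  have hMint : ∀ (μ : Measure S), IsFiniteMeasure μ → ∀ α : ℝ,
      Integrable (fun s => min (V s) α) μ := by
    intro μ hμ α
    refine (integrable_const (max H |α|)).mono'
      ((hV.min measurable_const).aestronglyMeasurable)
      (Filter.Eventually.of_forall fun s => ?_)
    rw [Real.norm_eq_abs, abs_le]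
    constructor
    · refine le_min (le_trans ?_ (hV0 s)) (le_trans ?_ (neg_abs_le α))
      · simp [hH0, abs_nonneg]
      · exact neg_le_neg (le_max_right H |α|)
    · exact le_trans (min_le_left _ _) (le_trans (hVH s) (le_max_left _ _))
  -- Lipschitz property of min
  have hminlip : ∀ a b c : ℝ, |min a b - min a c| ≤ |b - c| := by
    intro a b c
    have h1 := le_abs_self (b - c)
    have h2 := neg_abs_le (b - c)
    have h3 := abs_nonneg (b - c)
    rcases le_total a b with hab | hab <;> rcases le_total a c with hac | hac
    · rw [min_eq_left hab, min_eq_left hac, abs_le]; constructor <;> linarith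
    · rw [min_eq_left hab, min_eq_right hac, abs_le]; constructor <;> linarith
    · rw [min_eq_right hab, min_eq_left hac, abs_le]; constructor <;> linarith
    · rw [min_eq_right hab, min_eq_right hac, abs_le]; constructor <;> linarith
  -- continuity of the dual objective
  have hgcont : Continuous (fun α : ℝ => ∫ s, min (V s) α ∂μ0 - ρ * α) := by
    have hlip : LipschitzWith 1 (fun α : ℝ => ∫ s, min (V s) α ∂μ0) := by
      refine LipschitzWith.of_dist_le_mul fun α β => ?_
      rw [NNReal.coe_one, one_mul, Real.dist_eq, Real.dist_eq,
        ← integral_sub (hMint μ0 inferInstance α) (hMint μ0 inferInstance β)]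
      calc |∫ s, (min (V s) α - min (V s) β) ∂μ0|
          = ‖∫ s, (min (V s) α - min (V s) β) ∂μ0‖ := (Real.norm_eq_abs _).symm
        _ ≤ ∫ s, ‖min (V s) α - min (V s) β‖ ∂μ0 := norm_integral_le_integral_norm _
        _ = ∫ s, |min (V s) α - min (V s) β| ∂μ0 := by simp [Real.norm_eq_abs]
        _ ≤ ∫ _, |α - β| ∂μ0 := by
            refine integral_mono ((hMint μ0 inferInstance α).sub
              (hMint μ0 inferInstance β)).abs (integrable_const _) fun s => hminlip (V s) α β
        _ = |α - β| := by simp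
    exact hlip.continuous.sub (continuous_const.mul continuous_id)
  -- maximizer
  obtain ⟨αm, hαmmem, hαmax⟩ := isCompact_Icc.exists_isMaxOn
    (s := Set.Icc (0:ℝ) H) ⟨0, Set.left_mem_Icc.mpr hH0⟩ hgcont.continuousOn
  have hgmax : ∀ β ∈ Set.Icc (0:ℝ) H,
      ∫ s, min (V s) β ∂μ0 - ρ * β ≤ ∫ s, min (V s) αm ∂μ0 - ρ * αm :=
    fun β hβ => isMaxOn_iff.mp hαmax β hβ
  have hαm0 : 0 ≤ αm := hαmmem.1
  have hαmH : αm ≤ H := hαmmem.2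
  set T : Set ℝ := {x : ℝ | ∃ μ : Measure S, IsProbabilityMeasure μ ∧ tvDist μ μ0 ≤ ρ ∧
        x = ∫ s, V s ∂μ} with hT
  have hTne : T.Nonempty := by
    refine ⟨∫ s, V s ∂μ0, μ0, inferInstance, ?_, rfl⟩
    simp only [tvDist, Measure.sub_self]
    simp [hρ0.le]
  have hTbdd : BddBelow T := by
    refine ⟨0, fun x hx => ?_⟩
    obtain ⟨μ, hμ, _, rfl⟩ := hx
    exact integral_nonneg hV0
  -- lower bound: every dual value is ≤ every feasible value
  have hlow : ∀ α ∈ Set.Icc (0:ℝ) H, ∀ x ∈ T, ∫ s, min (V s) α ∂μ0 - ρ * α ≤ x := by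
    rintro α ⟨hα0, hαH⟩ x ⟨μ, hμ, htv, rfl⟩
    have hμν : (μ0 - μ) Set.univ = (μ - μ0) Set.univ :=
      TVAux.sub_univ_symm (by simp)
    have hbfin : (μ0 - μ) Set.univ ≠ ⊤ := measure_ne_top _ _
    have hb : ((μ0 - μ) Set.univ).toReal ≤ ρ := by
      have : tvDist μ μ0 = ((μ0 - μ) Set.univ).toReal := by
        rw [tvDist, ← hμν, ← two_mul, ENNReal.toReal_mul]
        norm_num
        ring
      linarith [htv, this ▸ htv]
    set w : S → ENNReal := fun s => ENNReal.ofReal (min (V s) α) with hw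
    have hwle : ∀ (μ' : Measure S), ∫⁻ s, w s ∂μ' ≤ ENNReal.ofReal α * μ' Set.univ := by
      intro μ'
      calc ∫⁻ s, w s ∂μ' ≤ ∫⁻ _, ENNReal.ofReal α ∂μ' :=
            lintegral_mono fun s => ENNReal.ofReal_le_ofReal (min_le_right _ _)
        _ = ENNReal.ofReal α * μ' Set.univ := lintegral_const _
    have hchain : ∫⁻ s, w s ∂μ0 ≤ ∫⁻ s, w s ∂μ + ENNReal.ofReal α * (μ0 - μ) Set.univ := by
      calc ∫⁻ s, w s ∂μ0 ≤ ∫⁻ s, w s ∂((μ0 - μ) + μ) :=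
            lintegral_mono' (TVAux.le_sub_add μ0 μ) le_rfl
        _ = ∫⁻ s, w s ∂(μ0 - μ) + ∫⁻ s, w s ∂μ := lintegral_add_measure _ _ _
        _ ≤ ENNReal.ofReal α * (μ0 - μ) Set.univ + ∫⁻ s, w s ∂μ := by
            refine add_le_add ?_ le_rfl
            simpa using hwle (μ0 - μ)
        _ = ∫⁻ s, w s ∂μ + ENNReal.ofReal α * (μ0 - μ) Set.univ := add_comm _ _
    have hnn : ∀ s, 0 ≤ min (V s) α := fun s => le_min (hV0 s) hα0
    have hint0 : ∫ s, min (V s) α ∂μ0 = (∫⁻ s, w s ∂μ0).toReal :=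
      integral_eq_lintegral_of_nonneg_ae (Filter.Eventually.of_forall hnn)
        (hV.min measurable_const).aestronglyMeasurable
    have hintμ : ∫ s, min (V s) α ∂μ = (∫⁻ s, w s ∂μ).toReal :=
      integral_eq_lintegral_of_nonneg_ae (Filter.Eventually.of_forall hnn)
        (hV.min measurable_const).aestronglyMeasurable
    have hμfin : ∫⁻ s, w s ∂μ ≠ ⊤ := by
      refine ne_of_lt (lt_of_le_of_lt (hwle μ) ?_)
      simp [lt_top_iff_ne_top]
    have hRHSfin : ∫⁻ s, w s ∂μ + ENNReal.ofReal α * (μ0 - μ) Set.univ ≠ ⊤ :=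
      ENNReal.add_ne_top.2 ⟨hμfin, ENNReal.mul_ne_top ENNReal.ofReal_ne_top hbfin⟩
    have hreal : ∫ s, min (V s) α ∂μ0 ≤ ∫ s, min (V s) α ∂μ + α * ((μ0 - μ) Set.univ).toReal := by
      rw [hint0, hintμ]
      have := ENNReal.toReal_mono hRHSfin hchain
      rwa [ENNReal.toReal_add hμfin (ENNReal.mul_ne_top ENNReal.ofReal_ne_top hbfin),
        ENNReal.toReal_mul, ENNReal.toReal_ofReal hα0] at this
    have hminV : ∫ s, min (V s) α ∂μ ≤ ∫ s, V s ∂μ :=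
      integral_mono (hMint μ inferInstance α) (hVint μ inferInstance)
        fun s => min_le_left _ _
    have hαb : α * ((μ0 - μ) Set.univ).toReal ≤ α * ρ :=
      mul_le_mul_of_nonneg_left hb hα0
    nlinarith [mul_le_mul_of_nonneg_left hρ0.le hα0]
  have hsup_le : (⨆ α : Set.Icc (0:ℝ) H, (∫ s, min (V s) α.1 ∂μ0 - ρ * α.1)) ≤ sInf T :=
    ciSup_le fun α => le_csInf hTne fun x hx => hlow α.1 α.2 x hx
  -- bddAbove of the range, and g αm vs the sup
  have hbddA : BddAbove (Set.range fun α : Set.Icc (0:ℝ) H =>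
      ∫ s, min (V s) α.1 ∂μ0 - ρ * α.1) := by
    refine ⟨∫ s, min (V s) αm ∂μ0 - ρ * αm, ?_⟩
    rintro x ⟨α, rfl⟩
    exact hgmax α.1 α.2
  have hgR : ∫ s, min (V s) αm ∂μ0 - ρ * αm ≤
      ⨆ α : Set.Icc (0:ℝ) H, (∫ s, min (V s) α.1 ∂μ0 - ρ * α.1) :=
    le_ciSup hbddA ⟨αm, hαmmem⟩
  refine le_antisymm (le_of_forall_pos_le_add fun ε hε => ?_) hsup_le
  -- upper bound: construct a near-optimal feasible measure
  have hε' : 0 < ε / ρ := div_pos hε hρ0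
  obtain ⟨s0, hs0⟩ : ∃ s, V s < ε / ρ :=
    exists_lt_of_ciInf_lt (by rw [hmin]; exact hε')
  set r : ENNReal := ENNReal.ofReal ρ with hr
  have hr1 : r ≤ 1 := by rw [hr, ← ENNReal.ofReal_one]; exact ENNReal.ofReal_le_ofReal hρ1
  have hrtop : r ≠ ⊤ := ENNReal.ofReal_ne_top
  have hrto : r.toReal = ρ := ENNReal.toReal_ofReal hρ0.le
  have hAgt : ∀ β : ℝ, MeasurableSet {s | β < V s} :=
    fun β => measurableSet_lt measurable_const hV
  -- upper crossing: above the maximizer, mass is at most ρ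
  have hup : ∀ β : ℝ, αm < β → μ0 {s | β < V s} ≤ r := by
    intro β hβ
    by_cases hβH : H ≤ β
    · have hemp : {s | β < V s} = ∅ := by
        ext s
        simp only [Set.mem_setOf_eq, Set.mem_empty_iff_false, iff_false, not_lt]
        exact le_trans (hVH s) hβH
      simp [hemp]
    · push_neg at hβH
      have hβIcc : β ∈ Set.Icc (0:ℝ) H := ⟨le_trans hαm0 hβ.le, hβH.le⟩
      have hgβ := hgmax β hβIcc
      have hpt : ∀ s, Set.indicator {s | β < V s} (fun _ => β - αm) s
          ≤ min (V s) β - min (V s) αm := by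
        intro s
        by_cases hs : s ∈ {s | β < V s}
        · rw [Set.indicator_of_mem hs]
          have hsv : β < V s := hs
          rw [min_eq_right hsv.le, min_eq_right (lt_trans hβ hsv).le]
        · rw [Set.indicator_of_notMem hs]
          have : min (V s) αm ≤ min (V s) β := min_le_min le_rfl hβ.le
          linarith
      have hmono := integral_mono ((integrable_const (β - αm)).indicator (hAgt β))
        ((hMint μ0 inferInstance β).sub (hMint μ0 inferInstance αm)) hpt
      simp only [Pi.sub_apply] at hmono
      rw [integral_indicator_const _ (hAgt β), smul_eq_mul,
        integral_sub (hMint μ0 inferInstance β) (hMint μ0 inferInstance αm)] at hmono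
      have hβα : 0 < β - αm := sub_pos.2 hβ
      have htoR : (μ0 {s | β < V s}).toReal ≤ ρ := by
        refine le_of_mul_le_mul_right ?_ hβα
        rw [measureReal_def] at hmono
        linarith
      exact (ENNReal.le_ofReal_iff_toReal_le (measure_ne_top _ _) hρ0.le).2 htoR
  have hp_le : μ0 {s | αm < V s} ≤ r := by
    have hU : {s | αm < V s} = ⋃ n : ℕ, {s | αm + 1/((n:ℝ)+1) < V s} := by
      ext s
      simp only [Set.mem_setOf_eq, Set.mem_iUnion]
      constructor
      · intro hs
        obtain ⟨n, hn⟩ := exists_nat_one_div_lt (sub_pos.2 hs)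
        exact ⟨n, by linarith⟩
      · rintro ⟨n, hn⟩
        have : 0 < 1/((n:ℝ)+1) := by positivity
        linarith
    have hdir : Directed (fun x1 x2 : Set S => x1 ⊆ x2)
        (fun n : ℕ => {s | αm + 1/((n:ℝ)+1) < V s}) := by
      refine Monotone.directed_le fun m n hmn s hs => ?_
      simp only [Set.mem_setOf_eq] at hs ⊢
      have hcast : ((m:ℝ)+1) ≤ ((n:ℝ)+1) := by
        have : (m:ℝ) ≤ (n:ℝ) := Nat.cast_le.2 hmn
        linarith
      have : 1/((n:ℝ)+1) ≤ 1/((m:ℝ)+1) := one_div_le_one_div_of_le (by positivity) hcast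
      linarith
    rw [hU, hdir.measure_iUnion]
    refine iSup_le fun n => hup _ ?_
    have : 0 < 1/((n:ℝ)+1) := by positivity
    linarith
  -- lower crossing: below the maximizer, upper mass is at least ρ
  have hdown : ∀ β : ℝ, 0 ≤ β → β < αm → r ≤ μ0 {s | β < V s} := by
    intro β hβ0 hβ
    have hβIcc : β ∈ Set.Icc (0:ℝ) H := ⟨hβ0, le_trans hβ.le hαmH⟩
    have hgβ := hgmax β hβIcc
    have hpt : ∀ s, min (V s) αm - min (V s) β
        ≤ Set.indicator {s | β < V s} (fun _ => αm - β) s := by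
      intro s
      by_cases hs : s ∈ {s | β < V s}
      · rw [Set.indicator_of_mem hs]
        have hsv : β < V s := hs
        rw [min_eq_right hsv.le]
        have : min (V s) αm ≤ αm := min_le_right _ _
        linarith
      · rw [Set.indicator_of_notMem hs]
        have hsv : V s ≤ β := not_lt.1 hs
        rw [min_eq_left hsv, min_eq_left (le_trans hsv hβ.le)]
        linarith
    have hmono := integral_mono ((hMint μ0 inferInstance αm).sub (hMint μ0 inferInstance β))
      ((integrable_const (αm - β)).indicator (hAgt β)) hpt
    simp only [Pi.sub_apply] at hmono
    rw [integral_indicator_const _ (hAgt β), smul_eq_mul,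
      integral_sub (hMint μ0 inferInstance αm) (hMint μ0 inferInstance β)] at hmono
    have hβα : 0 < αm - β := sub_pos.2 hβ
    have htoR : ρ ≤ (μ0 {s | β < V s}).toReal := by
      refine le_of_mul_le_mul_right ?_ hβα
      rw [measureReal_def] at hmono
      linarith
    exact ENNReal.ofReal_le_of_le_toReal htoR
  have hq_ge : r ≤ μ0 {s | αm ≤ V s} := by
    rcases eq_or_lt_of_le hαm0 with h0 | h0
    · have huniv : {s | αm ≤ V s} = Set.univ := by
        ext s
        simp only [Set.mem_setOf_eq, Set.mem_univ, iff_true]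
        rw [← h0]; exact hV0 s
      rw [huniv, measure_univ]; exact hr1
    · have hI : {s | αm ≤ V s} = ⋂ n : ℕ, {s | αm - αm/((n:ℝ)+1) < V s} := by
        ext s
        simp only [Set.mem_setOf_eq, Set.mem_iInter]
        constructor
        · intro hs n
          have : 0 < αm/((n:ℝ)+1) := by positivity
          linarith
        · intro hs
          by_contra hcon
          push_neg at hcon
          obtain ⟨n, hn⟩ := exists_nat_one_div_lt (div_pos (sub_pos.2 hcon) h0)
          have h2 : αm * (1/((n:ℝ)+1)) < αm * ((αm - V s)/αm) :=
            mul_lt_mul_of_pos_left hn h0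
          have h3 : αm * ((αm - V s)/αm) = αm - V s := by
            field_simp
          rw [mul_one_div, h3] at h2
          have := hs n
          linarith
      have hanti : Directed (fun x1 x2 : Set S => x1 ⊇ x2)
          (fun n : ℕ => {s | αm - αm/((n:ℝ)+1) < V s}) := by
        refine Antitone.directed_ge fun m n hmn s hs => ?_
        simp only [Set.mem_setOf_eq] at hs ⊢
        have hcast : ((m:ℝ)+1) ≤ ((n:ℝ)+1) := by
          have : (m:ℝ) ≤ (n:ℝ) := Nat.cast_le.2 hmn
          linarith
        have : αm/((n:ℝ)+1) ≤ αm/((m:ℝ)+1) :=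
          div_le_div_of_nonneg_left h0.le (by positivity) hcast
        linarith
      rw [hI, Directed.measure_iInter (fun n => (hAgt _).nullMeasurableSet) hanti
        ⟨0, measure_ne_top _ _⟩]
      refine le_iInf fun n => hdown _ ?_ ?_
      · have h4 : αm/((n:ℝ)+1) ≤ αm := div_le_self h0.le (by
          have : (0:ℝ) ≤ (n:ℝ) := Nat.cast_nonneg n
          linarith)
        linarith
      · have : 0 < αm/((n:ℝ)+1) := by positivity
        linarith
  -- the construction
  set A : Set S := {s | αm < V s} with hA
  set Q : Set S := {s | V s = αm} with hQ
  have hAm : MeasurableSet A := hAgt αm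
  have hQm : MeasurableSet Q := hV (measurableSet_singleton αm)
  have hdisj : Disjoint A Q := by
    rw [Set.disjoint_left]
    intro s hsA hsQ
    have h1 : αm < V s := hsA
    have h2 : V s = αm := hsQ
    linarith
  have hunion : A ∪ Q = {s | αm ≤ V s} := by
    ext s
    simp only [hA, hQ, Set.mem_union, Set.mem_setOf_eq]
    constructor
    · rintro (h | h)
      exacts [h.le, h.ge]
    · intro h
      rcases lt_or_eq_of_le h with h' | h'
      exacts [Or.inl h', Or.inr h'.symm]
  set p : ENNReal := μ0 A with hpdef
  set q : ENNReal := μ0 Q with hqdef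
  have hpq : r ≤ p + q := by
    calc r ≤ μ0 {s | αm ≤ V s} := hq_ge
      _ = μ0 (A ∪ Q) := by rw [hunion]
      _ = p + q := measure_union hdisj hQm
  have hp_le_r : p ≤ r := hp_le
  set c : ENNReal := (r - p)/q with hc
  have hcq : c * q = r - p := by
    by_cases hq0 : q = 0
    · have h1 : r - p = 0 := by
        rw [tsub_eq_zero_iff_le]
        rw [hq0, add_zero] at hpq
        exact hpq
      rw [hq0, mul_zero, h1]
    · exact ENNReal.div_mul_cancel hq0 (measure_ne_top _ _)
  have hc1 : c ≤ 1 := by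
    by_cases hq0 : q = 0
    · have h1 : r - p = 0 := by
        rw [tsub_eq_zero_iff_le]
        rw [hq0, add_zero] at hpq
        exact hpq
      rw [hc, h1, ENNReal.zero_div]
      exact zero_le_one
    · rw [hc]
      refine ENNReal.div_le_of_le_mul ?_
      rw [one_mul]
      exact tsub_le_iff_right.2 (by rwa [add_comm] at hpq)
  set ν : Measure S := μ0.restrict A + c • μ0.restrict Q with hν
  have hν_le : ν ≤ μ0 := by
    rw [Measure.le_iff]
    intro t ht
    have h1 : ν t = μ0 (t ∩ A) + c * μ0 (t ∩ Q) := by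
      rw [hν]
      simp [Measure.restrict_apply ht, smul_eq_mul]
    rw [h1]
    calc μ0 (t ∩ A) + c * μ0 (t ∩ Q)
        ≤ μ0 (t ∩ A) + μ0 (t ∩ Q) :=
          add_le_add le_rfl (mul_le_of_le_one_left zero_le hc1)
      _ = μ0 ((t ∩ A) ∪ (t ∩ Q)) :=
          (measure_union (hdisj.mono Set.inter_subset_right Set.inter_subset_right)
            (ht.inter hQm)).symm
      _ ≤ μ0 t := measure_mono
          (Set.union_subset Set.inter_subset_left Set.inter_subset_left)
  haveI hνfin : IsFiniteMeasure ν := isFiniteMeasure_of_le μ0 hν_le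
  have hνuniv : ν Set.univ = r := by
    have h1 : ν Set.univ = p + c * q := by
      rw [hν]
      simp [Measure.restrict_apply_univ, smul_eq_mul, hpdef, hqdef]
    rw [h1, hcq, add_tsub_cancel_of_le hp_le_r]
  set μ1 : Measure S := (μ0 - ν) + r • Measure.dirac s0 with hμ1
  have hsubuniv : (μ0 - ν) Set.univ = 1 - r := by
    rw [Measure.sub_apply MeasurableSet.univ hν_le, measure_univ, hνuniv]
  have hμ1univ : μ1 Set.univ = 1 := by
    rw [hμ1, Measure.add_apply, hsubuniv, Measure.smul_apply, measure_univ, smul_eq_mul,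
      mul_one, tsub_add_cancel_of_le hr1]
  haveI hμ1prob : IsProbabilityMeasure μ1 := ⟨hμ1univ⟩
  have hintμ1 : Integrable V μ1 := hVint μ1 inferInstance
  have hint_sub : Integrable V (μ0 - ν) :=
    hintμ1.mono_measure (by rw [hμ1]; exact Measure.le_add_right le_rfl)
  have hint_dir : Integrable V (r • Measure.dirac s0) :=
    hintμ1.mono_measure (by rw [hμ1]; exact Measure.le_add_left le_rfl)
  have hint_ν : Integrable V ν := (hVint μ0 inferInstance).mono_measure hν_le
  have hint_rA : Integrable V (μ0.restrict A) :=
    (hVint μ0 inferInstance).mono_measure Measure.restrict_le_self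
  have hint_rQ : Integrable V (c • μ0.restrict Q) :=
    hint_ν.mono_measure (by rw [hν]; exact Measure.le_add_left le_rfl)
  -- TV constraint holds
  have htv1 : tvDist μ1 μ0 ≤ ρ := by
    have h1 : (μ1 - μ0) Set.univ ≤ r := by
      have hsub : μ1 - μ0 ≤ r • Measure.dirac s0 := by
        refine Measure.sub_le_of_le_add ?_
        rw [hμ1, add_comm]
        exact add_le_add le_rfl Measure.sub_le
      calc (μ1 - μ0) Set.univ ≤ (r • Measure.dirac s0) Set.univ :=
            Measure.le_iff'.1 hsub Set.univ
        _ = r := by simp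
    have h2 : (μ0 - μ1) Set.univ ≤ r := by
      have hsub : μ0 - μ1 ≤ ν := by
        refine Measure.sub_le_of_le_add ?_
        calc μ0 ≤ (μ0 - ν) + ν := TVAux.le_sub_add μ0 ν
          _ = ν + (μ0 - ν) := add_comm _ _
          _ ≤ ν + μ1 := add_le_add le_rfl (by rw [hμ1]; exact Measure.le_add_right le_rfl)
      calc (μ0 - μ1) Set.univ ≤ ν Set.univ := Measure.le_iff'.1 hsub Set.univ
        _ = r := hνuniv
    rw [tvDist]
    have hsum : ((μ1 - μ0) Set.univ + (μ0 - μ1) Set.univ) ≤ r + r := add_le_add h1 h2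
    have hfin : r + r ≠ ⊤ := ENNReal.add_ne_top.2 ⟨hrtop, hrtop⟩
    have hto := ENNReal.toReal_mono hfin hsum
    rw [ENNReal.toReal_add hrtop hrtop, hrto] at hto
    linarith
  -- value of the constructed measure
  have hdirval : ∫ s, V s ∂(r • Measure.dirac s0) = ρ * V s0 := by
    rw [integral_smul_measure, integral_dirac' V s0 hV.stronglyMeasurable, hrto, smul_eq_mul]
  have hsubval : ∫ s, V s ∂(μ0 - ν) = ∫ s, V s ∂μ0 - ∫ s, V s ∂ν := by
    have hdecomp : (μ0 - ν) + ν = μ0 := Measure.sub_add_cancel_of_le hν_le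
    have h1 : ∫ s, V s ∂μ0 = ∫ s, V s ∂(μ0 - ν) + ∫ s, V s ∂ν := by
      conv_lhs => rw [← hdecomp]
      exact integral_add_measure hint_sub hint_ν
    linarith
  have hQval : ∫ s, V s ∂(μ0.restrict Q) = q.toReal * αm := by
    have h1 : ∫ s in Q, V s ∂μ0 = ∫ s in Q, αm ∂μ0 :=
      setIntegral_congr_fun hQm fun s hs => hs
    rw [h1, setIntegral_const, smul_eq_mul, measureReal_def]
  have hcfin : c ≠ ⊤ := (lt_of_le_of_lt hc1 ENNReal.one_lt_top).ne
  have hνval : ∫ s, V s ∂ν = (∫ s in A, V s ∂μ0) + (ρ - p.toReal) * αm := by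
    have h0 : ∫ s, V s ∂ν = ∫ s, V s ∂(μ0.restrict A) + ∫ s, V s ∂(c • μ0.restrict Q) := by
      rw [hν]
      exact integral_add_measure hint_rA hint_rQ
    have h1 : ∫ s, V s ∂(c • μ0.restrict Q) = c.toReal * (q.toReal * αm) := by
      rw [integral_smul_measure, hQval, smul_eq_mul]
    have h2 : c.toReal * q.toReal = ρ - p.toReal := by
      rw [← ENNReal.toReal_mul, hcq, ENNReal.toReal_sub_of_le hp_le_r hrtop, hrto]
    rw [h0, h1, ← mul_assoc, h2]
  have hsplitV : ∫ s in A, V s ∂μ0 + ∫ s in Aᶜ, V s ∂μ0 = ∫ s, V s ∂μ0 :=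
    integral_add_compl hAm (hVint μ0 inferInstance)
  have hsplitmin : ∫ s, min (V s) αm ∂μ0 = p.toReal * αm + ∫ s in Aᶜ, V s ∂μ0 := by
    rw [← integral_add_compl hAm (hMint μ0 inferInstance αm)]
    have e1 : ∫ s in A, min (V s) αm ∂μ0 = p.toReal * αm := by
      have h1 : ∫ s in A, min (V s) αm ∂μ0 = ∫ s in A, αm ∂μ0 :=
        setIntegral_congr_fun hAm fun s hs => min_eq_right (le_of_lt hs)
      rw [h1, setIntegral_const, smul_eq_mul, measureReal_def]
    have e2 : ∫ s in Aᶜ, min (V s) αm ∂μ0 = ∫ s in Aᶜ, V s ∂μ0 :=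
      setIntegral_congr_fun hAm.compl fun s hs => min_eq_left (not_lt.1 hs)
    rw [e1, e2]
  have hval : ∫ s, V s ∂μ1 = (∫ s, min (V s) αm ∂μ0 - ρ * αm) + ρ * V s0 := by
    have h0 : ∫ s, V s ∂μ1 = ∫ s, V s ∂(μ0 - ν) + ∫ s, V s ∂(r • Measure.dirac s0) := by
      rw [hμ1]
      exact integral_add_measure hint_sub hint_dir
    rw [h0, hsubval, hdirval, hνval]
    linarith
  -- conclude
  have hmem : (∫ s, V s ∂μ1) ∈ T := ⟨μ1, hμ1prob, htv1, rfl⟩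
  have hρε : ρ * V s0 ≤ ε := by
    have h1 : ρ * V s0 ≤ ρ * (ε / ρ) := mul_le_mul_of_nonneg_left hs0.le hρ0.le
    rw [mul_div_cancel₀ _ (ne_of_gt hρ0)] at h1
    exact h1
  have hfinal : ∫ s, V s ∂μ1 ≤
      (⨆ α : Set.Icc (0:ℝ) H, (∫ s, min (V s) α.1 ∂μ0 - ρ * α.1)) + ε := by
    calc ∫ s, V s ∂μ1 = (∫ s, min (V s) αm ∂μ0 - ρ * αm) + ρ * V s0 := hval
      _ ≤ (∫ s, min (V s) αm ∂μ0 - ρ * αm) + ε := by linarith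
      _ ≤ _ + ε := add_le_add hgR le_rfl
  exact le_trans (csInf_le hTbdd hmem) hfinal
end

section
/- Let S be a measurable space, μ⁰ a probability measure on S, σ > 0, and V : S → [0,H] bounded measurable with inf_s V(s) = 0. Then inf over probability measures μ on S of ( E_{s∼μ}[V(s)] + σ·D_TV(μ‖μ⁰) ) equals E_{s∼μ⁰}[min(V(s), σ)]. -/
open MeasureTheory

section Aux

variable {α : Type*} [MeasurableSpace α]

lemma aux_restrict_le {μ ν : Measure α} {s : Set α} (hs : MeasurableSet s)
    (h : ∀ t, MeasurableSet t → t ⊆ s → μ t ≤ ν t) : μ.restrict s ≤ ν.restrict s := by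
  rw [Measure.le_iff]
  intro t ht
  rw [Measure.restrict_apply ht, Measure.restrict_apply ht]
  exact h _ (ht.inter hs) Set.inter_subset_right

lemma aux_sub_apply_of_restrict_le (μ ν : Measure α) [IsFiniteMeasure ν] {s : Set α}
    (hs : MeasurableSet s) (h : ν.restrict s ≤ μ.restrict s) :
    (μ - ν) s = μ s - ν s := by
  have e1 : (μ - ν) s = (μ.restrict s - ν.restrict s) s := by
    rw [← Measure.restrict_sub_eq_restrict_sub_restrict hs, Measure.restrict_apply hs,
      Set.inter_self]
  rw [e1, Measure.sub_apply hs h, Measure.restrict_apply hs, Measure.restrict_apply hs,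
    Set.inter_self]

/-- For finite measures, `μ ≤ (μ - ν) + ν`. -/
lemma aux_le_sub_add (μ ν : Measure α) [IsFiniteMeasure μ] [IsFiniteMeasure ν] :
    μ ≤ (μ - ν) + ν := by
  obtain ⟨s, hs, h1, h2⟩ := hahn_decomposition (μ := μ) (ν := ν)
  rw [Measure.le_iff]
  intro t ht
  have hres : ν.restrict s ≤ μ.restrict s := aux_restrict_le hs h1
  have hu : MeasurableSet (t ∩ s) := ht.inter hs
  have key : μ (t ∩ s) ≤ (μ - ν) (t ∩ s) + ν (t ∩ s) := by
    have e1 : (μ - ν) (t ∩ s) = (μ.restrict s - ν.restrict s) (t ∩ s) := by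
      rw [← Measure.restrict_sub_eq_restrict_sub_restrict hs, Measure.restrict_apply hu,
        Set.inter_assoc, Set.inter_self]
    rw [e1, Measure.sub_apply hu hres, Measure.restrict_apply hu, Measure.restrict_apply hu,
      Set.inter_assoc, Set.inter_self]
    exact le_tsub_add
  have key2 : μ (t \ s) ≤ ν (t \ s) := h2 _ (ht.diff hs) fun x hx => hx.2
  calc μ t = μ (t ∩ s) + μ (t \ s) := (measure_inter_add_diff t hs).symm
    _ ≤ ((μ - ν) (t ∩ s) + ν (t ∩ s)) + ν (t \ s) := add_le_add key key2
    _ ≤ ((μ - ν) t + ν (t ∩ s)) + ν (t \ s) :=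
        add_le_add (add_le_add_left (measure_mono Set.inter_subset_left) _) le_rfl
    _ = (μ - ν) t + ν t := by rw [add_assoc, measure_inter_add_diff t hs]
    _ = ((μ - ν) + ν) t := by simp

/-- For probability measures the two one-sided total masses agree. -/
lemma aux_sub_univ_comm (μ ν : Measure α) [IsProbabilityMeasure μ] [IsProbabilityMeasure ν] :
    (μ - ν) Set.univ = (ν - μ) Set.univ := by
  obtain ⟨s, hs, h1, h2⟩ := hahn_decomposition (μ := μ) (ν := ν)
  have hνμs : ν.restrict s ≤ μ.restrict s := aux_restrict_le hs h1
  have hμνc : μ.restrict sᶜ ≤ ν.restrict sᶜ := aux_restrict_le hs.compl h2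
  have e1 : (μ - ν) Set.univ = (μ - ν) s + (μ - ν) sᶜ := (measure_add_measure_compl hs).symm
  have e2 : (ν - μ) Set.univ = (ν - μ) s + (ν - μ) sᶜ := (measure_add_measure_compl hs).symm
  have z1 : (μ - ν) sᶜ = 0 :=
    Measure.sub_apply_eq_zero_of_restrict_le_restrict hμνc hs.compl
  have z2 : (ν - μ) s = 0 :=
    Measure.sub_apply_eq_zero_of_restrict_le_restrict hνμs hs
  have a1 : (μ - ν) s = μ s - ν s := aux_sub_apply_of_restrict_le μ ν hs hνμs
  have a2 : (ν - μ) sᶜ = ν sᶜ - μ sᶜ := aux_sub_apply_of_restrict_le ν μ hs.compl hμνc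
  rw [e1, e2, z1, z2, a1, a2, add_zero, zero_add]
  have h1s : ν s ≤ μ s := h1 s hs subset_rfl
  have h2s : μ sᶜ ≤ ν sᶜ := h2 sᶜ hs.compl subset_rfl
  have hfin : ν s + μ sᶜ ≠ ⊤ := by
    exact ENNReal.add_ne_top.2 ⟨measure_ne_top ν s, measure_ne_top μ sᶜ⟩
  have key : (μ s - ν s) + (ν s + μ sᶜ) = (ν sᶜ - μ sᶜ) + (ν s + μ sᶜ) := by
    rw [← add_assoc, tsub_add_cancel_of_le h1s, add_comm (ν s) (μ sᶜ), ← add_assoc,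
      tsub_add_cancel_of_le h2s]
    rw [measure_add_measure_compl hs, add_comm, measure_add_measure_compl hs]
    simp [measure_univ]
  exact WithTop.add_right_cancel hfin key

end Aux

/-- Dual formulation of the TV-regularized robust expectation under the
fail-state assumption (`inf V = 0`):
`inf_μ ( E_{s∼μ}[V] + σ·D_TV(μ‖μ⁰) ) = E_{s∼μ⁰}[min(V, σ)]`. -/
theorem tv_regularized_expectation_dual {S : Type*} [MeasurableSpace S] [Nonempty S]
    (μ0 : Measure S) [IsProbabilityMeasure μ0] (σ H : ℝ) (hσ : 0 < σ)
    (V : S → ℝ) (hV : Measurable V) (hV0 : ∀ s, 0 ≤ V s) (hVH : ∀ s, V s ≤ H)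
    (hmin : (⨅ s, V s) = 0) :
    sInf {x : ℝ | ∃ μ : Measure S, IsProbabilityMeasure μ ∧
        x = (∫ s, V s ∂μ) + σ * tvDist μ μ0}
      = ∫ s, min (V s) σ ∂μ0 := by
  -- integrability helpers
  have integV : ∀ (ν : Measure S), IsFiniteMeasure ν → Integrable V ν := by
    intro ν hν
    exact ⟨hV.aestronglyMeasurable,
      HasFiniteIntegral.of_bounded (C := H) (Filter.Eventually.of_forall fun s => by
        rw [Real.norm_eq_abs, abs_of_nonneg (hV0 s)]; exact hVH s)⟩
  have integMin : ∀ (ν : Measure S), IsFiniteMeasure ν →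
      Integrable (fun s => min (V s) σ) ν := by
    intro ν hν
    exact ⟨(hV.min measurable_const).aestronglyMeasurable,
      HasFiniteIntegral.of_bounded (C := σ) (Filter.Eventually.of_forall fun s => by
        rw [Real.norm_eq_abs, abs_of_nonneg (le_min (hV0 s) hσ.le)]
        exact min_le_right _ _)⟩
  set T : ℝ := ∫ s, min (V s) σ ∂μ0 with hT
  have hne : {x : ℝ | ∃ μ : Measure S, IsProbabilityMeasure μ ∧
      x = (∫ s, V s ∂μ) + σ * tvDist μ μ0}.Nonempty :=
    ⟨(∫ s, V s ∂μ0) + σ * tvDist μ0 μ0, μ0, inferInstance, rfl⟩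
  -- every element is at least T
  have hlb : ∀ x ∈ {x : ℝ | ∃ μ : Measure S, IsProbabilityMeasure μ ∧
      x = (∫ s, V s ∂μ) + σ * tvDist μ μ0}, T ≤ x := by
    rintro x ⟨μ, hμ, rfl⟩
    haveI := hμ
    set b : ENNReal := (μ0 - μ) Set.univ with hb
    have hbfin : b ≠ ⊤ := measure_ne_top _ _
    have htv : tvDist μ μ0 = b.toReal := by
      rw [tvDist, aux_sub_univ_comm μ μ0, ← hb, ENNReal.toReal_add hbfin hbfin]
      ring
    haveI : IsFiniteMeasure ((μ0 - μ) + μ) := by infer_instance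
    have hle : μ0 ≤ (μ0 - μ) + μ := aux_le_sub_add μ0 μ
    have step1 : T ≤ ∫ s, min (V s) σ ∂((μ0 - μ) + μ) :=
      integral_mono_measure hle
        (Filter.Eventually.of_forall fun s => le_min (hV0 s) hσ.le)
        (integMin _ inferInstance)
    have step2 : ∫ s, min (V s) σ ∂((μ0 - μ) + μ)
        = (∫ s, min (V s) σ ∂(μ0 - μ)) + ∫ s, min (V s) σ ∂μ :=
      integral_add_measure (integMin _ inferInstance) (integMin _ inferInstance)
    have step3 : ∫ s, min (V s) σ ∂(μ0 - μ) ≤ σ * b.toReal := by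
      calc ∫ s, min (V s) σ ∂(μ0 - μ) ≤ ∫ _, σ ∂(μ0 - μ) :=
            integral_mono (integMin _ inferInstance) (integrable_const σ)
              (fun s => min_le_right _ _)
        _ = b.toReal * σ := by rw [integral_const]; rfl
        _ = σ * b.toReal := mul_comm _ _
    have step4 : ∫ s, min (V s) σ ∂μ ≤ ∫ s, V s ∂μ :=
      integral_mono (integMin _ inferInstance) (integV _ inferInstance)
        (fun s => min_le_left _ _)
    rw [htv]
    linarith
  refine le_antisymm ?_ (le_csInf hne hlb)
  -- upper bound
  have hbdd : BddBelow {x : ℝ | ∃ μ : Measure S, IsProbabilityMeasure μ ∧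
      x = (∫ s, V s ∂μ) + σ * tvDist μ μ0} := ⟨T, hlb⟩
  refine le_of_forall_pos_le_add fun ε hε => ?_
  obtain ⟨s0, hs0⟩ : ∃ s0, V s0 < ε := exists_lt_of_ciInf_lt (by rw [hmin]; exact hε)
  set A : Set S := V ⁻¹' Set.Iic σ with hA
  have hAm : MeasurableSet A := hV measurableSet_Iic
  set c : ENNReal := μ0 Aᶜ with hc
  have hcfin : c ≠ ⊤ := measure_ne_top _ _
  have hc1 : c ≤ 1 := (prob_le_one)
  set μ : Measure S := μ0.restrict A + c • Measure.dirac s0 with hμdef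
  haveI hdf : IsFiniteMeasure (c • Measure.dirac s0) := by
    refine ⟨?_⟩
    rw [Measure.smul_apply, smul_eq_mul, Measure.dirac_apply' _ MeasurableSet.univ]
    simpa using hcfin.lt_top
  haveI hμprob : IsProbabilityMeasure μ := by
    constructor
    rw [hμdef, Measure.add_apply, Measure.restrict_apply_univ, Measure.smul_apply,
      smul_eq_mul, Measure.dirac_apply' _ MeasurableSet.univ]
    simp only [Set.indicator_univ, Pi.one_apply, mul_one]
    rw [hc, measure_add_measure_compl hAm, measure_univ]
  haveI : IsFiniteMeasure μ := inferInstance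
  -- compute the integral of V w.r.t. μ
  have hintV : ∫ s, V s ∂μ = (∫ s in A, V s ∂μ0) + c.toReal * V s0 := by
    rw [hμdef, integral_add_measure (integV _ inferInstance) (integV _ hdf),
      integral_smul_measure, integral_dirac' _ _ hV.stronglyMeasurable, smul_eq_mul]
  -- total variation bound
  have htv : tvDist μ μ0 ≤ c.toReal := by
    have h1 : (μ - μ0) Set.univ ≤ c := by
      have : μ - μ0 ≤ c • Measure.dirac s0 := by
        apply Measure.sub_le_of_le_add
        rw [hμdef, add_comm]
        exact add_le_add_right Measure.restrict_le_self _
      calc (μ - μ0) Set.univ ≤ (c • Measure.dirac s0) Set.univ := this _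
        _ = c := by
            rw [Measure.smul_apply, smul_eq_mul, Measure.dirac_apply' _ MeasurableSet.univ]
            simp
    have h2 : (μ0 - μ) Set.univ ≤ c := by
      have : μ0 - μ ≤ μ0.restrict Aᶜ := by
        apply Measure.sub_le_of_le_add
        calc μ0 = μ0.restrict A + μ0.restrict Aᶜ :=
              (Measure.restrict_add_restrict_compl hAm).symm
          _ ≤ μ0.restrict Aᶜ + μ := by
              rw [add_comm]
              refine add_le_add_right ?_ _
              rw [hμdef]
              exact Measure.le_add_right le_rfl
      calc (μ0 - μ) Set.univ ≤ μ0.restrict Aᶜ Set.univ := this _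
        _ = c := by rw [Measure.restrict_apply_univ]
    have hsum : ((μ - μ0) Set.univ + (μ0 - μ) Set.univ).toReal ≤ (c + c).toReal :=
      ENNReal.toReal_mono (by simp [hcfin, ENNReal.add_ne_top]) (add_le_add h1 h2)
    rw [tvDist]
    rw [ENNReal.toReal_add hcfin hcfin] at hsum
    linarith
  -- T in terms of A
  have hTsplit : T = (∫ s in A, V s ∂μ0) + σ * c.toReal := by
    rw [hT, ← integral_add_compl hAm (integMin μ0 inferInstance)]
    congr 1
    · exact setIntegral_congr_fun hAm fun s hs => min_eq_left hs
    · rw [setIntegral_congr_fun hAm.compl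
        (fun s hs => min_eq_right (le_of_lt (lt_of_not_ge (by simpa [hA] using hs)))), setIntegral_const,
        smul_eq_mul, measureReal_def, ← hc]
      ring
  have hmem : (∫ s, V s ∂μ) + σ * tvDist μ μ0 ∈ {x : ℝ | ∃ μ : Measure S,
      IsProbabilityMeasure μ ∧ x = (∫ s, V s ∂μ) + σ * tvDist μ μ0} :=
    ⟨μ, hμprob, rfl⟩
  have hval : (∫ s, V s ∂μ) + σ * tvDist μ μ0 ≤ T + ε := by
    have hcr1 : c.toReal ≤ 1 := by
      simpa using ENNReal.toReal_mono (by simp) hc1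
    have hcr0 : 0 ≤ c.toReal := ENNReal.toReal_nonneg
    have hVs0 : 0 ≤ V s0 := hV0 s0
    have : c.toReal * V s0 ≤ ε := by
      calc c.toReal * V s0 ≤ 1 * V s0 := by nlinarith
        _ ≤ ε := by linarith
    rw [hintV, hTsplit]
    nlinarith [mul_le_mul_of_nonneg_left htv hσ.le]
  exact le_trans (csInf_le hbdd hmem) hval
end

section
/- Let μ⁰ be a probability measure on S, ρ > 0, and let V₁, V₂ : S → [0,H] with V₁ ≥ V₂ pointwise and min values 0. Then max_{α∈[0,H]}( E_{μ⁰}[min(V₁,α)] − ρα ) − max_{α∈[0,H]}( E_{μ⁰}[min(V₂,α)] − ρα ) ≤ E_{μ⁰}[V₁ − V₂]. In particular the TV-robust expectation operator V ↦ inf_{D_TV(μ‖μ⁰)≤ρ} E_μ[V] is monotone and its increments are dominated by the nominal expectation of the increment. -/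
open MeasureTheory

/-- The dual form of the TV-constrained robust expectation is monotone, with
increments dominated by the nominal expectation of the increment: for
`0 ≤ V₂ ≤ V₁ ≤ H` with minimum values `0`,
`max_α(E_{μ⁰}[min(V₁,α)] − ρα) − max_α(E_{μ⁰}[min(V₂,α)] − ρα) ≤ E_{μ⁰}[V₁ − V₂]`. -/
theorem tv_robust_dual_increment_bound {S : Type*} [MeasurableSpace S] [Nonempty S]
    (μ0 : Measure S) [IsProbabilityMeasure μ0] (ρ H : ℝ) (hρ : 0 < ρ)
    (V₁ V₂ : S → ℝ) (h₁ : Measurable V₁) (h₂ : Measurable V₂)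
    (hge : ∀ s, V₂ s ≤ V₁ s) (h20 : ∀ s, 0 ≤ V₂ s) (h1H : ∀ s, V₁ s ≤ H)
    (hmin1 : (⨅ s, V₁ s) = 0) (hmin2 : (⨅ s, V₂ s) = 0) :
    (⨆ α : Set.Icc (0 : ℝ) H, (∫ s, min (V₁ s) α.1 ∂μ0 - ρ * α.1)) -
      (⨆ α : Set.Icc (0 : ℝ) H, (∫ s, min (V₂ s) α.1 ∂μ0 - ρ * α.1))
      ≤ ∫ s, (V₁ s - V₂ s) ∂μ0 := by
  obtain ⟨s₀⟩ := ‹Nonempty S›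
  have hH : (0 : ℝ) ≤ H := le_trans (h20 s₀) (le_trans (hge s₀) (h1H s₀))
  haveI : Nonempty (Set.Icc (0 : ℝ) H) := ⟨⟨0, le_refl 0, hH⟩⟩
  -- integrability helper
  have hint : ∀ (W : S → ℝ), Measurable W → (∀ s, 0 ≤ W s) → (∀ s, W s ≤ H) →
      Integrable W μ0 := by
    intro W hm h0 hWH
    refine (integrable_const H).mono' hm.aestronglyMeasurable ?_
    filter_upwards with s
    rw [Real.norm_eq_abs, abs_le]
    exact ⟨by linarith [h0 s], hWH s⟩
  have hint1 : ∀ α : Set.Icc (0 : ℝ) H, Integrable (fun s => min (V₁ s) α.1) μ0 := by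
    intro α
    exact hint _ (h₁.min measurable_const)
      (fun s => le_min (le_trans (h20 s) (hge s)) α.2.1)
      (fun s => le_trans (min_le_left _ _) (h1H s))
  have hint2 : ∀ α : Set.Icc (0 : ℝ) H, Integrable (fun s => min (V₂ s) α.1) μ0 := by
    intro α
    exact hint _ (h₂.min measurable_const)
      (fun s => le_min (h20 s) α.2.1)
      (fun s => le_trans (min_le_left _ _) (le_trans (hge s) (h1H s)))
  have hintd : Integrable (fun s => V₁ s - V₂ s) μ0 :=
    hint _ (h₁.sub h₂) (fun s => by linarith [hge s])
      (fun s => by linarith [h1H s, h20 s])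
  -- sup of f₂ is bounded above
  have hbdd : BddAbove (Set.range fun α : Set.Icc (0 : ℝ) H =>
      ∫ s, min (V₂ s) α.1 ∂μ0 - ρ * α.1) := by
    refine ⟨H, ?_⟩
    rintro _ ⟨α, rfl⟩
    have h1 : ∫ s, min (V₂ s) α.1 ∂μ0 ≤ ∫ _s, H ∂μ0 := by
      refine integral_mono (hint2 α) (integrable_const H) ?_
      intro s
      exact le_trans (min_le_left _ _) (le_trans (hge s) (h1H s))
    have h2 : ∫ _s, H ∂μ0 = H := by simp
    have h3 : 0 ≤ ρ * α.1 := mul_nonneg hρ.le α.2.1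
    simp only
    linarith
  rw [sub_le_iff_le_add]
  refine ciSup_le fun α => ?_
  have key : ∫ s, min (V₁ s) α.1 ∂μ0 - ∫ s, min (V₂ s) α.1 ∂μ0 ≤ ∫ s, (V₁ s - V₂ s) ∂μ0 := by
    rw [← integral_sub (hint1 α) (hint2 α)]
    refine integral_mono ((hint1 α).sub (hint2 α)) hintd ?_
    intro s
    simp only
    rcases le_total (V₁ s) α.1 with h | h <;> rcases le_total (V₂ s) α.1 with h' | h' <;>
      simp [min_eq_left, min_eq_right, h, h'] <;> linarith [hge s]
  have hle2 : ∫ s, min (V₂ s) α.1 ∂μ0 - ρ * α.1 ≤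
      ⨆ β : Set.Icc (0 : ℝ) H, (∫ s, min (V₂ s) β.1 ∂μ0 - ρ * β.1) :=
    le_ciSup hbdd α
  linarith
end

section
/- Consider the function class V of maps S → R of the form V(s) = min( max_π { ⟨π(·|s), wᵀφ(s,·) + β·Σᵢ ‖φᵢ(s,·)eᵢ‖_{Λ^{-1}} ⟩ − (1/η)KL(π‖π₀) }, H ), parameterized by w with ‖w‖₂ ≤ L, β ∈ [0,B], and positive definite Λ with λ_min(Λ) ≥ λ, where ‖φ(s,a)‖₂ ≤ 1 for all (s,a). Then the ε-covering number N_ε of V in sup-norm distance satisfies log N_ε ≤ d·log(1 + 4L·vol(A)/ε) + d²·log(1 + 8√d·B²·vol(A)²/(λ·ε²)). -/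
open Matrix Finset MeasureTheory Metric



lemma abs_sqrt_sub_sqrt_le (a b : ℝ) (ha : 0 ≤ a) (hb : 0 ≤ b) :
    |Real.sqrt a - Real.sqrt b| ≤ Real.sqrt |a - b| := by
  have key : ∀ x y : ℝ, 0 ≤ x → x ≤ y → Real.sqrt y - Real.sqrt x ≤ Real.sqrt (y - x) := by
    intro x y hx hxy
    have s1 : Real.sqrt (y - x) ^ 2 = y - x := Real.sq_sqrt (by linarith)
    have s2 : Real.sqrt x ^ 2 = x := Real.sq_sqrt hx
    have h1 : Real.sqrt y ≤ Real.sqrt (y - x) + Real.sqrt x := by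
      have hy : y ≤ (Real.sqrt (y - x) + Real.sqrt x) ^ 2 := by
        nlinarith [Real.sqrt_nonneg (y - x), Real.sqrt_nonneg x]
      calc Real.sqrt y ≤ Real.sqrt ((Real.sqrt (y - x) + Real.sqrt x) ^ 2) :=
            Real.sqrt_le_sqrt hy
        _ = |Real.sqrt (y - x) + Real.sqrt x| := Real.sqrt_sq_eq_abs _
        _ = Real.sqrt (y - x) + Real.sqrt x := abs_of_nonneg (by positivity)
    linarith
  rcases le_total a b with h | h
  · rw [abs_of_nonpos (by nlinarith [Real.sqrt_le_sqrt h]), abs_of_nonpos (by linarith)]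
    have := key a b ha h
    rw [neg_sub, neg_sub]
    linarith [key a b ha h]
  · rw [abs_of_nonneg (by nlinarith [Real.sqrt_le_sqrt h]), abs_of_nonneg (by linarith)]
    exact key b a hb h

lemma gibbs_nonneg {A : Type*} [Fintype A] (p π0 : A → ℝ) (hp : ∀ a, 0 ≤ p a)
    (hps : ∑ a, p a = 1) (hπ : ∀ a, 0 < π0 a) (hπs : ∑ a, π0 a = 1) :
    0 ≤ ∑ a, p a * Real.log (p a / π0 a) := by
  have key : ∀ a, p a - π0 a ≤ p a * Real.log (p a / π0 a) := by
    intro a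
    rcases (hp a).eq_or_lt with h | h
    · rw [← h]; simp [(hπ a).le]
    · have hd : 0 < π0 a / p a := div_pos (hπ a) h
      have hlog := Real.log_le_sub_one_of_pos hd
      have : Real.log (π0 a / p a) = Real.log (π0 a) - Real.log (p a) :=
        Real.log_div (hπ a).ne' h.ne'
      have h2 : Real.log (p a / π0 a) = Real.log (p a) - Real.log (π0 a) :=
        Real.log_div h.ne' (hπ a).ne'
      rw [h2]
      have : π0 a / p a * p a = π0 a := div_mul_cancel₀ _ h.ne'
      nlinarith
  calc (0:ℝ) = ∑ a, (p a - π0 a) := by rw [Finset.sum_sub_distrib, hps, hπs]; ring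
    _ ≤ _ := Finset.sum_le_sum fun a _ => key a

lemma ciSup_abs_sub_le {ι : Sort*} [Nonempty ι] (f g : ι → ℝ) {Mf Mg c : ℝ}
    (hf : ∀ i, f i ≤ Mf) (hg : ∀ i, g i ≤ Mg) (h : ∀ i, |f i - g i| ≤ c) :
    |(⨆ i, f i) - ⨆ i, g i| ≤ c := by
  have hbf : BddAbove (Set.range f) := ⟨Mf, by rintro x ⟨i, rfl⟩; exact hf i⟩
  have hbg : BddAbove (Set.range g) := ⟨Mg, by rintro x ⟨i, rfl⟩; exact hg i⟩
  rw [abs_sub_le_iff]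
  constructor
  · rw [sub_le_iff_le_add]
    refine ciSup_le fun i => ?_
    have h1 : f i ≤ g i + c := by have := abs_le.1 (h i); linarith [this.1, this.2]
    exact h1.trans (by linarith [le_ciSup hbg i])
  · rw [sub_le_iff_le_add]
    refine ciSup_le fun i => ?_
    have h1 : g i ≤ f i + c := by have := abs_le.1 (h i); linarith [this.1, this.2]
    exact h1.trans (by linarith [le_ciSup hbf i])

lemma abs_min_sub_min_le (a b H : ℝ) (h : |a - b| ≤ c) : |min a H - min b H| ≤ c := by
  rcases abs_le.1 h with ⟨h1, h2⟩
  rw [abs_le]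
  constructor <;> rcases le_total a H with ha | ha <;> rcases le_total b H with hb | hb <;>
    simp [min_eq_left, min_eq_right, ha, hb] <;> linarith [abs_nonneg (a-b), (abs_le.1 h).1]

lemma inv_diag_bounds {d : ℕ} {lam : ℝ} (hlam : 0 < lam) {Λ : Matrix (Fin d) (Fin d) ℝ}
    (hpd : Λ.PosDef) (hq : ∀ x : Fin d → ℝ, lam * (x ⬝ᵥ x) ≤ x ⬝ᵥ (Λ *ᵥ x)) (i : Fin d) :
    0 ≤ Λ⁻¹ i i ∧ Λ⁻¹ i i ≤ 1 / lam := by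
  classical
  set y : Fin d → ℝ := fun j => Λ⁻¹ j i with hy
  have hdet : IsUnit Λ.det := isUnit_iff_ne_zero.mpr hpd.det_pos.ne'
  have hmv : Λ *ᵥ y = Pi.single i 1 := by
    have : y = Λ⁻¹ *ᵥ Pi.single i 1 := by
      funext j
      simp [hy, Matrix.mulVec_single]
    rw [this, Matrix.mulVec_mulVec, Matrix.mul_nonsing_inv Λ hdet, Matrix.one_mulVec]
  have h1 : lam * (y ⬝ᵥ y) ≤ Λ⁻¹ i i := by
    have := hq y
    rw [hmv, dotProduct_single] at this
    simpa [hy] using this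
  have hyy : (0:ℝ) ≤ y ⬝ᵥ y := by
    simp only [dotProduct]
    exact Finset.sum_nonneg fun j _ => mul_self_nonneg _
  have ht0 : 0 ≤ Λ⁻¹ i i := le_trans (by positivity) h1
  refine ⟨ht0, ?_⟩
  have hsq : (Λ⁻¹ i i) ^ 2 ≤ y ⬝ᵥ y := by
    have hcs := Finset.sum_mul_sq_le_sq_mul_sq Finset.univ (fun j => (Pi.single i (1:ℝ) : Fin d → ℝ) j) y
    have h2 : ∑ j, (Pi.single i (1:ℝ) : Fin d → ℝ) j * y j = Λ⁻¹ i i := by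
      simp [Pi.single_apply, hy]
    have h3 : ∑ j, ((Pi.single i (1:ℝ) : Fin d → ℝ) j) ^ 2 = 1 := by
      simp [Pi.single_apply, sq]
    rw [h2, h3, one_mul] at hcs
    simpa [dotProduct, sq] using hcs
  -- lam * (Λ⁻¹ i i)^2 ≤ lam * (y⬝y) ≤ Λ⁻¹ i i
  by_contra hcon
  push_neg at hcon
  have htpos : 0 < Λ⁻¹ i i := lt_trans (by positivity) hcon
  have hlt : 1 < lam * Λ⁻¹ i i := by
    rw [div_lt_iff₀ hlam] at hcon; linarith
  have h5 : Λ⁻¹ i i * 1 < Λ⁻¹ i i * (lam * Λ⁻¹ i i) := by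
    exact mul_lt_mul_of_pos_left hlt htpos
  nlinarith [mul_le_mul_of_nonneg_left hsq hlam.le, h1]


lemma sep_card_bound (d : ℕ) {L δ : ℝ} (hL : 0 < L) (hδ : 0 < δ)
    (T : Finset (EuclideanSpace ℝ (Fin d)))
    (hT : ↑T ⊆ closedBall (0 : EuclideanSpace ℝ (Fin d)) L)
    (hsep : ∀ x ∈ T, ∀ y ∈ T, x ≠ y → δ < dist x y) :
    (T.card : ℝ) ≤ (1 + 2 * L / δ) ^ d := by
  let E := EuclideanSpace ℝ (Fin d)
  have hfr : Module.finrank ℝ E = d := by simp [E]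
  have hδ2 : (0:ℝ) < δ / 2 := by linarith
  -- disjoint balls
  have hdisj : Set.PairwiseDisjoint (↑T) (fun x : E => ball x (δ / 2)) := by
    intro x hx y hy hxy
    apply ball_disjoint_ball
    have := hsep x hx y hy hxy
    linarith
  have hmeas := measure_biUnion_finset (μ := volume) hdisj (fun x _ => measurableSet_ball)
  have hsub : (⋃ x ∈ T, ball x (δ / 2)) ⊆ ball (0 : E) (L + δ / 2) := by
    intro z hz
    simp only [Set.mem_iUnion] at hz
    obtain ⟨x, hx, hzx⟩ := hz
    have hx0 : dist x 0 ≤ L := mem_closedBall.mp (hT hx)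
    have : dist z 0 ≤ dist z x + dist x 0 := dist_triangle _ _ _
    have hzx' : dist z x < δ / 2 := mem_ball.mp hzx
    exact mem_ball.mpr (by linarith)
  have hballx : ∀ x : E, volume (ball x (δ / 2)) =
      ENNReal.ofReal ((δ / 2) ^ d) * volume (ball (0 : E) 1) := fun x => by
    rw [Measure.addHaar_ball_of_pos _ x hδ2, hfr]
  have hball0 : volume (ball (0 : E) (L + δ / 2)) =
      ENNReal.ofReal ((L + δ / 2) ^ d) * volume (ball (0 : E) 1) := by
    rw [Measure.addHaar_ball_of_pos _ _ (by linarith : (0:ℝ) < L + δ / 2), hfr]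
  have hchain : (T.card : ENNReal) * (ENNReal.ofReal ((δ / 2) ^ d) * volume (ball (0 : E) 1))
      ≤ ENNReal.ofReal ((L + δ / 2) ^ d) * volume (ball (0 : E) 1) := by
    calc (T.card : ENNReal) * (ENNReal.ofReal ((δ / 2) ^ d) * volume (ball (0 : E) 1))
        = ∑ x ∈ T, volume (ball x (δ / 2)) := by
          rw [Finset.sum_congr rfl fun x _ => hballx x, Finset.sum_const, nsmul_eq_mul]
      _ = volume (⋃ x ∈ T, ball x (δ / 2)) := hmeas.symm
      _ ≤ volume (ball (0 : E) (L + δ / 2)) := measure_mono hsub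
      _ = _ := hball0
  have hB1pos : volume (ball (0 : E) 1) ≠ 0 := (measure_ball_pos volume _ one_pos).ne'
  have hB1top : volume (ball (0 : E) 1) ≠ ⊤ := measure_ball_lt_top.ne
  rw [← mul_assoc] at hchain
  have hchain2 : (T.card : ENNReal) * ENNReal.ofReal ((δ / 2) ^ d)
      ≤ ENNReal.ofReal ((L + δ / 2) ^ d) :=
    (ENNReal.mul_le_mul_iff_left hB1pos hB1top).mp hchain
  have hfact : (L + δ / 2) = (1 + 2 * L / δ) * (δ / 2) := by field_simp; ring
  rw [hfact, mul_pow, ENNReal.ofReal_mul (by positivity)] at hchain2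
  have hchain3 : (T.card : ENNReal) ≤ ENNReal.ofReal ((1 + 2 * L / δ) ^ d) :=
    (ENNReal.mul_le_mul_iff_left (ENNReal.ofReal_pos.mpr (by positivity)).ne'
      ENNReal.ofReal_ne_top).mp hchain2
  rw [← ENNReal.ofReal_natCast] at hchain3
  exact (ENNReal.ofReal_le_ofReal_iff (by positivity)).mp hchain3


lemma euclidean_ball_cover (d : ℕ) {L δ : ℝ} (hL : 0 < L) (hδ : 0 < δ) :
    ∃ T : Finset (EuclideanSpace ℝ (Fin d)),
      (T.card : ℝ) ≤ (1 + 2 * L / δ) ^ d ∧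
      ∀ x ∈ closedBall (0 : EuclideanSpace ℝ (Fin d)) L, ∃ y ∈ T, dist x y ≤ δ := by
  classical
  set Ksep : Finset (EuclideanSpace ℝ (Fin d)) → Prop := fun T =>
    ↑T ⊆ closedBall (0 : EuclideanSpace ℝ (Fin d)) L ∧ ∀ x ∈ T, ∀ y ∈ T, x ≠ y → δ < dist x y with hKsep
  set Kset : Set ℕ := {n | ∃ T, Ksep T ∧ T.card = n} with hKset
  have h0 : 0 ∈ Kset := ⟨∅, ⟨by simp, by simp⟩, rfl⟩
  have hbdd : BddAbove Kset := by
    refine ⟨⌈(1 + 2 * L / δ) ^ d⌉₊, ?_⟩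
    rintro n ⟨T, hT, rfl⟩
    have hb := sep_card_bound d hL hδ T hT.1 hT.2
    exact_mod_cast hb.trans (Nat.le_ceil _)
  obtain ⟨T, hT, hTcard⟩ := Nat.sSup_mem ⟨0, h0⟩ hbdd
  refine ⟨T, (sep_card_bound d hL hδ T hT.1 hT.2), ?_⟩
  intro x hx
  by_contra hcon
  push_neg at hcon
  have hxsep : ∀ y ∈ T, δ < dist x y := hcon
  have hxT : x ∉ T := fun hxT => by
    have := hxsep x hxT
    simp at this; linarith
  have hmem : T.card + 1 ∈ Kset := by
    refine ⟨insert x T, ⟨?_, ?_⟩, by rw [Finset.card_insert_of_notMem hxT]⟩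
    · intro z hz
      rcases Finset.mem_coe.mp hz |> Finset.mem_insert.mp with rfl | hzT
      · exact hx
      · exact hT.1 hzT
    · intro a ha b hb hab
      rcases Finset.mem_insert.mp ha with rfl | haT <;>
        rcases Finset.mem_insert.mp hb with rfl | hbT
      · exact absurd rfl hab
      · exact hxsep b hbT
      · rw [dist_comm]; exact hxsep a haT
      · exact hT.2 a haT b hbT hab
  have := le_csSup hbdd hmem
  rw [hTcard] at this
  omega

lemma grid_cover {R s' : ℝ} (hR : 0 ≤ R) (hs : 0 < s') :
    ∃ F : Finset ℝ, (F.card : ℝ) ≤ 1 + R / s' ∧ (∀ y ∈ F, 0 ≤ y) ∧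
      ∀ x, 0 ≤ x → x ≤ R → ∃ y ∈ F, |x - y| ≤ s' := by
  refine ⟨(Finset.range (⌊R / s'⌋₊ + 1)).image (fun j : ℕ => (j : ℝ) * s'), ?_, ?_, ?_⟩
  · calc ((Finset.image (fun j : ℕ => (j : ℝ) * s') (Finset.range (⌊R / s'⌋₊ + 1))).card : ℝ)
        ≤ ((Finset.range (⌊R / s'⌋₊ + 1)).card : ℝ) := by
          exact_mod_cast Finset.card_image_le
      _ = (⌊R / s'⌋₊ : ℝ) + 1 := by simp
      _ ≤ R / s' + 1 := by
          have := Nat.floor_le (div_nonneg hR hs.le); linarith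
      _ = 1 + R / s' := by ring
  · intro y hy
    obtain ⟨j, _, rfl⟩ := Finset.mem_image.mp hy
    exact mul_nonneg (Nat.cast_nonneg _) hs.le
  · intro x hx0 hxR
    refine ⟨(⌊x / s'⌋₊ : ℝ) * s', Finset.mem_image.mpr ⟨⌊x / s'⌋₊,
      Finset.mem_range.mpr ?_, rfl⟩, ?_⟩
    · have : ⌊x / s'⌋₊ ≤ ⌊R / s'⌋₊ := Nat.floor_le_floor (by gcongr)
      omega
    · have h1 : (⌊x / s'⌋₊ : ℝ) ≤ x / s' := Nat.floor_le (div_nonneg hx0 hs.le)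
      have h2 : x / s' < (⌊x / s'⌋₊ : ℝ) + 1 := Nat.lt_floor_add_one _
      rw [abs_le]
      constructor
      · have := mul_le_mul_of_nonneg_right h1 hs.le
        rw [div_mul_cancel₀ _ hs.ne'] at this
        linarith
      · have := mul_le_mul_of_nonneg_right h2.le hs.le
        rw [add_mul, div_mul_cancel₀ _ hs.ne', one_mul] at this
        linarith

set_option maxHeartbeats 3200000 in
/-- Covering-number bound for the class of clipped KL-regularized optimistic value
functions: for parameters `‖w‖₂ ≤ L`, `β ∈ [0,B]`, `λ_min(Λ) ≥ λ`, and features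
with `‖φ(s,a)‖₂ ≤ 1`, the ε-covering number `N_ε` in sup-norm satisfies
`log N_ε ≤ d·log(1 + 4L·vol(A)/ε) + d²·log(1 + 8√d·B²·vol(A)²/(λε²))`, where
the action space is finite and `vol(A)` is its cardinality (counting measure). -/
theorem value_class_covering_number {S A : Type*} [Fintype A] [Nonempty A] (d : ℕ)
    (φ : S → A → Fin d → ℝ) (hφ : ∀ s a, ∑ i, (φ s a i) ^ 2 ≤ 1)
    (π0 : A → ℝ) (hπ0 : ∀ a, 0 < π0 a) (hπ0sum : ∑ a, π0 a = 1)
    (η L B lam H ε : ℝ) (hη : 0 < η) (hL : 0 < L) (hB : 0 < B)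
    (hlam : 0 < lam) (hε : 0 < ε) :
    ∃ (n : ℕ) (g : Fin n → S → ℝ),
      (n : ℝ) ≤ Real.exp
          (d * Real.log (1 + 4 * L * (Fintype.card A : ℝ) / ε) +
           d ^ 2 * Real.log (1 + 8 * Real.sqrt d * B ^ 2 *
             (Fintype.card A : ℝ) ^ 2 / (lam * ε ^ 2))) ∧
      ∀ (w : Fin d → ℝ) (β : ℝ) (Λ : Matrix (Fin d) (Fin d) ℝ),
        Real.sqrt (∑ i, (w i) ^ 2) ≤ L → β ∈ Set.Icc 0 B → Λ.PosDef →
        (∀ x : Fin d → ℝ, lam * (x ⬝ᵥ x) ≤ x ⬝ᵥ (Λ *ᵥ x)) →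
        ∃ j : Fin n, ∀ s : S,
          |min (⨆ p : {p : A → ℝ // (∀ a, 0 ≤ p a) ∧ (∑ a, p a) = 1},
              ((∑ a, p.1 a * (w ⬝ᵥ φ s a +
                  β * ∑ i, Real.sqrt (φ s a i * (Λ⁻¹ i i) * φ s a i)))
                - (1 / η) * ∑ a, p.1 a * Real.log (p.1 a / π0 a))) H
            - g j s| ≤ ε := by
  classical
  have hvA : (1 : ℝ) ≤ (Fintype.card A : ℝ) := by exact_mod_cast Fintype.card_pos
  -- covers
  obtain ⟨Tw, hTwcard, hTwcov⟩ := euclidean_ball_cover d hL (half_pos hε)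
  have hs' : (0:ℝ) < ε ^ 2 / (4 * (d + 1)) := by positivity
  obtain ⟨F, hFcard, hFnn, hFcov⟩ := grid_cover (R := B ^ 2 / lam) (by positivity) hs'
  set Fu : Finset (Fin d → ℝ) := Fintype.piFinset (fun _ => F) with hFu
  refine ⟨Tw.card * Fu.card, fun j s =>
    min (⨆ p : {p : A → ℝ // (∀ a, 0 ≤ p a) ∧ (∑ a, p a) = 1},
      ((∑ a, p.1 a * (((Tw.equivFin.symm (finProdFinEquiv.symm j).1).1 : Fin d → ℝ) ⬝ᵥ φ s a +
          ∑ i, |φ s a i| * Real.sqrt ((Fu.equivFin.symm (finProdFinEquiv.symm j).2).1 i)))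
        - (1 / η) * ∑ a, p.1 a * Real.log (p.1 a / π0 a))) H, ?_, ?_⟩
  · -- cardinality bound
    set P : ℝ := 1 + 4 * L * (Fintype.card A : ℝ) / ε with hP
    set Q : ℝ := 1 + 8 * Real.sqrt d * B ^ 2 * (Fintype.card A : ℝ) ^ 2 / (lam * ε ^ 2) with hQ
    have hP0 : 0 < P := by
      rw [hP]
      have : 0 ≤ 4 * L * (Fintype.card A : ℝ) / ε :=
        div_nonneg (mul_nonneg (by linarith) (Nat.cast_nonneg _)) hε.le
      linarith
    have hQ0 : 0 < Q := by
      rw [hQ]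
      have : 0 ≤ 8 * Real.sqrt d * B ^ 2 * (Fintype.card A : ℝ) ^ 2 / (lam * ε ^ 2) :=
        div_nonneg (by positivity) (by positivity)
      linarith
    have hcardι : ((Tw.card * Fu.card : ℕ) : ℝ) = (Tw.card : ℝ) * (F.card : ℝ) ^ d := by
      rw [hFu, Fintype.card_piFinset_const]
      push_cast
      ring
    have hTwP : (Tw.card : ℝ) ≤ P ^ d := by
      refine hTwcard.trans ?_
      have h1 : 1 + 2 * L / (ε / 2) = 1 + 4 * L / ε := by field_simp; ring
      rw [h1]
      apply pow_le_pow_left₀ (by positivity)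
      have : 4 * L / ε ≤ 4 * L * (Fintype.card A : ℝ) / ε := by
        rw [div_le_div_iff₀ hε hε]
        nlinarith [mul_le_mul_of_nonneg_right (mul_le_mul_of_nonneg_left hvA
          (by nlinarith : (0:ℝ) ≤ 4 * L)) hε.le]
      linarith
    have hFQ : ((F.card : ℝ)) ^ d ≤ Q ^ d ^ 2 := by
      rcases Nat.eq_zero_or_pos d with rfl | hd1
      · simp
      · have hd1' : (1:ℝ) ≤ d := by exact_mod_cast hd1
        have hsq : (1:ℝ) ≤ Real.sqrt d := by
          rw [show (1:ℝ) = Real.sqrt 1 by simp]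
          exact Real.sqrt_le_sqrt (by exact_mod_cast hd1)
        have hFQd : (F.card : ℝ) ≤ Q ^ d := by
          have h2 : (F.card : ℝ) ≤ 1 + (B ^ 2 / lam) / (ε ^ 2 / (4 * (d + 1))) := hFcard
          have h3 : (B ^ 2 / lam) / (ε ^ 2 / (4 * (d + 1))) = 4 * (d + 1) * B ^ 2 / (lam * ε ^ 2) := by
            field_simp
          have hq0 : (0:ℝ) ≤ 8 * Real.sqrt d * B ^ 2 * (Fintype.card A : ℝ) ^ 2 / (lam * ε ^ 2) := by
            positivity
          have hbern : 1 + (d : ℝ) * (8 * Real.sqrt d * B ^ 2 * (Fintype.card A : ℝ) ^ 2 / (lam * ε ^ 2)) ≤ Q ^ d := by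
            rw [hQ]
            exact one_add_mul_le_pow (by linarith) d
          refine h2.trans (le_trans ?_ hbern)
          rw [h3]
          have hc : (0:ℝ) < B ^ 2 / (lam * ε ^ 2) := by positivity
          have hA2 : (1:ℝ) ≤ (Fintype.card A : ℝ) ^ 2 := by nlinarith
          have hone : (1:ℝ) ≤ Real.sqrt d * (Fintype.card A : ℝ) ^ 2 := by nlinarith
          have : 4 * ((d:ℝ) + 1) * B ^ 2 / (lam * ε ^ 2) ≤
              (d : ℝ) * (8 * Real.sqrt d * B ^ 2 * (Fintype.card A : ℝ) ^ 2 / (lam * ε ^ 2)) := by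
            rw [mul_div_assoc']
            gcongr ?_ / _
            nlinarith [mul_le_mul_of_nonneg_left hone
              (by positivity : (0:ℝ) ≤ 8 * (d:ℝ) * B ^ 2), hd1', sq_nonneg B]
          linarith
        calc ((F.card : ℝ)) ^ d ≤ (Q ^ d) ^ d := by
              apply pow_le_pow_left₀ (by positivity) hFQd
          _ = Q ^ d ^ 2 := by rw [← pow_mul, sq]
    have hexp : Real.exp ((d : ℝ) * Real.log P + (d : ℝ) ^ 2 * Real.log Q) = P ^ d * Q ^ d ^ 2 := by
      rw [Real.exp_add]
      congr 1
      · rw [Real.exp_nat_mul, Real.exp_log hP0]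
      · rw [show ((d : ℝ) ^ 2) = ((d ^ 2 : ℕ) : ℝ) by push_cast; ring,
          Real.exp_nat_mul, Real.exp_log hQ0]
    rw [hcardι, hexp]
    exact mul_le_mul hTwP hFQ (by positivity) (by positivity)
  · -- covering property
    rintro w β Λ hw ⟨hβ0, hβB⟩ hpd hq
    have hdiag : ∀ i, 0 ≤ Λ⁻¹ i i ∧ Λ⁻¹ i i ≤ 1 / lam := inv_diag_bounds hlam hpd hq
    set t : Fin d → ℝ := fun i => β ^ 2 * Λ⁻¹ i i with ht
    have ht0 : ∀ i, 0 ≤ t i := fun i => mul_nonneg (sq_nonneg β) (hdiag i).1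
    have htR : ∀ i, t i ≤ B ^ 2 / lam := by
      intro i
      have h1 : β ^ 2 ≤ B ^ 2 := by nlinarith
      have := mul_le_mul h1 (hdiag i).2 (hdiag i).1 (by positivity)
      calc t i ≤ B ^ 2 * (1 / lam) := this
        _ = B ^ 2 / lam := by ring
    have hui : ∀ i, ∃ v ∈ F, |t i - v| ≤ ε ^ 2 / (4 * (d + 1)) :=
      fun i => hFcov (t i) (ht0 i) (htR i)
    choose u hu1 hu2 using hui
    have huF : u ∈ Fu := Fintype.mem_piFinset.mpr hu1
    have hwball : (WithLp.toLp 2 w : EuclideanSpace ℝ (Fin d)) ∈ closedBall 0 L := by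
      rw [mem_closedBall, EuclideanSpace.dist_eq]
      have : ∀ i, dist ((WithLp.toLp 2 w : EuclideanSpace ℝ (Fin d)) i) ((0 : EuclideanSpace ℝ (Fin d)) i) ^ 2 = (w i) ^ 2 := by
        intro i
        rw [Real.dist_eq]
        simp [sq_abs]
      rw [Finset.sum_congr rfl fun i _ => this i]
      exact hw
    obtain ⟨y, hyT, hyd⟩ := hTwcov _ hwball
    refine ⟨finProdFinEquiv (Tw.equivFin ⟨y, hyT⟩, Fu.equivFin ⟨u, huF⟩), ?_⟩
    intro s
    simp only [Equiv.symm_apply_apply]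
    -- now the analytic estimate
    set r : A → ℝ := fun a => w ⬝ᵥ φ s a +
      β * ∑ i, Real.sqrt (φ s a i * (Λ⁻¹ i i) * φ s a i) with hr
    set r' : A → ℝ := fun a => ((⟨y, hyT⟩ : {x // x ∈ Tw}).1 : Fin d → ℝ) ⬝ᵥ φ s a +
      ∑ i, |φ s a i| * Real.sqrt ((⟨u, huF⟩ : {u // u ∈ Fu}).1 i) with hr'
    have hr'eq : ∀ a, r' a = (y : Fin d → ℝ) ⬝ᵥ φ s a + ∑ i, |φ s a i| * Real.sqrt (u i) :=
      fun a => rfl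
    have key : ∀ a, |r a - r' a| ≤ ε := by
      intro a
      have hbonus : β * ∑ i, Real.sqrt (φ s a i * (Λ⁻¹ i i) * φ s a i) =
          ∑ i, |φ s a i| * Real.sqrt (t i) := by
        rw [Finset.mul_sum]
        refine Finset.sum_congr rfl fun i _ => ?_
        have h1 : φ s a i * (Λ⁻¹ i i) * φ s a i = φ s a i ^ 2 * Λ⁻¹ i i := by ring
        rw [h1, Real.sqrt_mul (sq_nonneg _), Real.sqrt_sq_eq_abs, ht]
        rw [Real.sqrt_mul (sq_nonneg β), Real.sqrt_sq hβ0]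
        ring
      have hT1 : |w ⬝ᵥ φ s a - (y : Fin d → ℝ) ⬝ᵥ φ s a| ≤ ε / 2 := by
        have hdiff : w ⬝ᵥ φ s a - (y : Fin d → ℝ) ⬝ᵥ φ s a =
            ∑ i, (w i - (y : Fin d → ℝ) i) * φ s a i := by
          simp [dotProduct, Finset.sum_sub_distrib, sub_mul]
        have hd2 : ∑ i, (w i - (y : Fin d → ℝ) i) ^ 2 ≤ (ε / 2) ^ 2 := by
          have hdist : dist (WithLp.toLp 2 w : EuclideanSpace ℝ (Fin d)) y =
              Real.sqrt (∑ i, (w i - (y : Fin d → ℝ) i) ^ 2) := by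
            rw [EuclideanSpace.dist_eq]
            congr 1
            refine Finset.sum_congr rfl fun i _ => ?_
            rw [Real.dist_eq, sq_abs]
          have h1 : Real.sqrt (∑ i, (w i - (y : Fin d → ℝ) i) ^ 2) ≤ ε / 2 := by
            rw [← hdist]; exact hyd
          have h2 : Real.sqrt (∑ i, (w i - (y : Fin d → ℝ) i) ^ 2) ^ 2 =
              ∑ i, (w i - (y : Fin d → ℝ) i) ^ 2 :=
            Real.sq_sqrt (Finset.sum_nonneg fun i _ => sq_nonneg _)
          nlinarith [Real.sqrt_nonneg (∑ i, (w i - (y : Fin d → ℝ) i) ^ 2)]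
        have hcs := Finset.sum_mul_sq_le_sq_mul_sq Finset.univ
          (fun i => w i - (y : Fin d → ℝ) i) (φ s a)
        rw [hdiff]
        have hz2 : (∑ i, (w i - (y : Fin d → ℝ) i) * φ s a i) ^ 2 ≤ (ε / 2) ^ 2 := by
          calc (∑ i, (w i - (y : Fin d → ℝ) i) * φ s a i) ^ 2
              ≤ (∑ i, (w i - (y : Fin d → ℝ) i) ^ 2) * ∑ i, φ s a i ^ 2 := hcs
            _ ≤ (ε / 2) ^ 2 * 1 := by
                apply mul_le_mul hd2 (hφ s a) (Finset.sum_nonneg fun i _ => sq_nonneg _)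
                  (by positivity)
            _ = (ε / 2) ^ 2 := by ring
        calc |∑ i, (w i - (y : Fin d → ℝ) i) * φ s a i|
            = Real.sqrt ((∑ i, (w i - (y : Fin d → ℝ) i) * φ s a i) ^ 2) :=
              (Real.sqrt_sq_eq_abs _).symm
          _ ≤ Real.sqrt ((ε / 2) ^ 2) := Real.sqrt_le_sqrt hz2
          _ = ε / 2 := Real.sqrt_sq (by positivity)
      have hT2 : |∑ i, |φ s a i| * Real.sqrt (t i) - ∑ i, |φ s a i| * Real.sqrt (u i)| ≤ ε / 2 := by
        have h1 : |∑ i, |φ s a i| * Real.sqrt (t i) - ∑ i, |φ s a i| * Real.sqrt (u i)| ≤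
            ∑ i, |φ s a i| * Real.sqrt (|t i - u i|) := by
          rw [← Finset.sum_sub_distrib]
          refine (Finset.abs_sum_le_sum_abs _ _).trans (Finset.sum_le_sum fun i _ => ?_)
          rw [← mul_sub, abs_mul, abs_abs]
          exact mul_le_mul_of_nonneg_left
            (abs_sqrt_sub_sqrt_le _ _ (ht0 i) (hFnn _ (hu1 i))) (abs_nonneg _)
        have h2 : (∑ i, |φ s a i| * Real.sqrt (|t i - u i|)) ^ 2 ≤ (ε / 2) ^ 2 := by
          have hcs := Finset.sum_mul_sq_le_sq_mul_sq Finset.univ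
            (fun i => |φ s a i|) (fun i => Real.sqrt (|t i - u i|))
          have hsum : ∑ i, Real.sqrt (|t i - u i|) ^ 2 = ∑ i, |t i - u i| :=
            Finset.sum_congr rfl fun i _ => Real.sq_sqrt (abs_nonneg _)
          have hsum2 : ∑ i, |t i - u i| ≤ (d : ℝ) * (ε ^ 2 / (4 * (d + 1))) := by
            calc ∑ i, |t i - u i| ≤ ∑ _i : Fin d, (ε ^ 2 / (4 * (d + 1))) :=
                  Finset.sum_le_sum fun i _ => hu2 i
              _ = (d : ℝ) * (ε ^ 2 / (4 * (d + 1))) := by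
                  rw [Finset.sum_const, Finset.card_univ, Fintype.card_fin, nsmul_eq_mul]
          have hsum3 : (d : ℝ) * (ε ^ 2 / (4 * (d + 1))) ≤ ε ^ 2 / 4 := by
            rw [mul_div_assoc', div_le_div_iff₀ (by positivity) (by norm_num : (0:ℝ) < 4)]
            nlinarith [sq_nonneg ε, Nat.cast_nonneg (α := ℝ) d]
          have hφ2 : ∑ i, |φ s a i| ^ 2 ≤ 1 := by
            calc ∑ i, |φ s a i| ^ 2 = ∑ i, φ s a i ^ 2 := by
                  refine Finset.sum_congr rfl fun i _ => by rw [sq_abs]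
              _ ≤ 1 := hφ s a
          calc (∑ i, |φ s a i| * Real.sqrt (|t i - u i|)) ^ 2
              ≤ (∑ i, |φ s a i| ^ 2) * ∑ i, Real.sqrt (|t i - u i|) ^ 2 := hcs
            _ ≤ 1 * (ε ^ 2 / 4) := by
                apply mul_le_mul hφ2 (by rw [hsum]; linarith)
                  (Finset.sum_nonneg fun i _ => sq_nonneg _) zero_le_one
            _ = (ε / 2) ^ 2 := by ring
        refine h1.trans ?_
        have hnn : 0 ≤ ∑ i, |φ s a i| * Real.sqrt (|t i - u i|) :=
          Finset.sum_nonneg fun i _ => mul_nonneg (abs_nonneg _) (Real.sqrt_nonneg _)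
        nlinarith
      have : r a - r' a = (w ⬝ᵥ φ s a - (y : Fin d → ℝ) ⬝ᵥ φ s a) +
          (∑ i, |φ s a i| * Real.sqrt (t i) - ∑ i, |φ s a i| * Real.sqrt (u i)) := by
        rw [hr'eq a, hr, ← hbonus]
        ring
      rw [this]
      calc |_ + _| ≤ _ + _ := abs_add_le _ _
        _ ≤ ε / 2 + ε / 2 := add_le_add hT1 hT2
        _ = ε := by ring
    -- now compare the sups
    have hPnonempty : Nonempty {p : A → ℝ // (∀ a, 0 ≤ p a) ∧ (∑ a, p a) = 1} :=
      ⟨⟨π0, fun a => (hπ0 a).le, hπ0sum⟩⟩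
    set f : {p : A → ℝ // (∀ a, 0 ≤ p a) ∧ (∑ a, p a) = 1} → ℝ := fun p =>
      (∑ a, p.1 a * r a) - (1 / η) * ∑ a, p.1 a * Real.log (p.1 a / π0 a) with hf
    set g' : {p : A → ℝ // (∀ a, 0 ≤ p a) ∧ (∑ a, p a) = 1} → ℝ := fun p =>
      (∑ a, p.1 a * r' a) - (1 / η) * ∑ a, p.1 a * Real.log (p.1 a / π0 a) with hg'
    have hple : ∀ (p : {p : A → ℝ // (∀ a, 0 ≤ p a) ∧ (∑ a, p a) = 1}) (a : A), p.1 a ≤ 1 := by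
      intro p a
      exact le_trans (Finset.single_le_sum (fun b _ => p.2.1 b) (Finset.mem_univ a))
        (le_of_eq p.2.2)
    have hbound : ∀ (ρ : A → ℝ) (p : {p : A → ℝ // (∀ a, 0 ≤ p a) ∧ (∑ a, p a) = 1}),
        (∑ a, p.1 a * ρ a) - (1 / η) * ∑ a, p.1 a * Real.log (p.1 a / π0 a) ≤ ∑ a, |ρ a| := by
      intro ρ p
      have hKL : 0 ≤ ∑ a, p.1 a * Real.log (p.1 a / π0 a) :=
        gibbs_nonneg p.1 π0 p.2.1 p.2.2 hπ0 hπ0sum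
      have h1 : ∑ a, p.1 a * ρ a ≤ ∑ a, |ρ a| := by
        refine Finset.sum_le_sum fun a _ => ?_
        calc p.1 a * ρ a ≤ p.1 a * |ρ a| :=
              mul_le_mul_of_nonneg_left (le_abs_self _) (p.2.1 a)
          _ ≤ 1 * |ρ a| := mul_le_mul_of_nonneg_right (hple p a) (abs_nonneg _)
          _ = |ρ a| := one_mul _
      have h2 : 0 ≤ (1 / η) * ∑ a, p.1 a * Real.log (p.1 a / π0 a) :=
        mul_nonneg (by positivity) hKL
      linarith
    have hdiffp : ∀ p : {p : A → ℝ // (∀ a, 0 ≤ p a) ∧ (∑ a, p a) = 1}, |f p - g' p| ≤ ε := by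
      intro p
      have : f p - g' p = ∑ a, p.1 a * (r a - r' a) := by
        rw [hf, hg']
        simp only [mul_sub]
        rw [Finset.sum_sub_distrib]
        ring
      rw [this]
      calc |∑ a, p.1 a * (r a - r' a)| ≤ ∑ a, |p.1 a * (r a - r' a)| :=
            Finset.abs_sum_le_sum_abs _ _
        _ ≤ ∑ a, p.1 a * ε := by
            refine Finset.sum_le_sum fun a _ => ?_
            rw [abs_mul, abs_of_nonneg (p.2.1 a)]
            exact mul_le_mul_of_nonneg_left (key a) (p.2.1 a)
        _ = ε := by rw [← Finset.sum_mul, p.2.2, one_mul]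
    have hsup : |(⨆ p, f p) - ⨆ p, g' p| ≤ ε :=
      ciSup_abs_sub_le f g' (hbound r) (hbound r') hdiffp
    exact abs_min_sub_min_le _ _ H hsup
end
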